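/- arXiv:2006.15883 — 3 statements merged into one kernel-verified Lean document; each statement's English description precedes it below -/
import Mathlib

section
/- Let p ≥ 1, let u, û : ℤ/pℤ → ℝ, and let g̲, ḡ : ℤ/pℤ → ℝ be nonnegative. Assume: (i) for every i, û(i) ≥ û(i+1) - g̲(i) and u(i) ≤ u(i+1) + ḡ(i); (ii) the non-free-loop property: for every choice function φ with φ(i) ∈ {-g̲(i), ḡ(i)} for all i, ∑_i φ(i) ≠ 0. Let Γ̂ = { i : u(i) - û(i) = max_{l} (u(l) - û(l)) }. Then there exists i₀ ∈ Γ̂ such that u(i₀) > u(i₀+1) - g̲(i₀) and û(i₀) < û(i₀+1) + ḡ(i₀). -/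
/-- Index-selection lemma for the comparison principle: some maximizer of `u - û`
is strictly away from both its lower and upper interconnected obstacles. -/
theorem index_selection (p : ℕ) [NeZero p] (u uhat gLow gUp : ZMod p → ℝ)
    (hgLow : ∀ i, 0 ≤ gLow i) (hgUp : ∀ i, 0 ≤ gUp i)
    (hsuper : ∀ i, uhat (i + 1) - gLow i ≤ uhat i)
    (hsub : ∀ i, u i ≤ u (i + 1) + gUp i)
    (hnfl : ∀ φ : ZMod p → ℝ, (∀ i, φ i = -gLow i ∨ φ i = gUp i) → ∑ i, φ i ≠ 0) :
    ∃ i₀ : ZMod p, (∀ l, u l - uhat l ≤ u i₀ - uhat i₀) ∧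
      u (i₀ + 1) - gLow i₀ < u i₀ ∧ uhat i₀ < uhat (i₀ + 1) + gUp i₀ := by
  by_contra hcon
  push_neg at hcon
  -- a maximizer exists
  obtain ⟨i₀, hmax⟩ := Finite.exists_max (fun i : ZMod p => u i - uhat i)
  -- key step: if i is a maximizer, so is i+1, and u i - u (i+1) is ±obstacle
  have key : ∀ i : ZMod p, (∀ l, u l - uhat l ≤ u i - uhat i) →
      (∀ l, u l - uhat l ≤ u (i + 1) - uhat (i + 1)) ∧
        (u i - u (i + 1) = -gLow i ∨ u i - u (i + 1) = gUp i) := by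
    intro i hi
    by_cases hc : u (i + 1) - gLow i < u i
    case neg =>
      have h : u i ≤ u (i + 1) - gLow i := not_lt.1 hc
      have h1 := hsuper i
      have h2 : u i - uhat i ≤ u (i + 1) - uhat (i + 1) := by linarith
      have h3 := hi (i + 1)
      constructor
      · intro l; linarith [hi l]
      · left; linarith
    case pos =>
      have h : uhat (i + 1) + gUp i ≤ uhat i := hcon i hi hc
      have h1 := hsub i
      have h2 : u i - uhat i ≤ u (i + 1) - uhat (i + 1) := by linarith
      have h3 := hi (i + 1)
      constructor
      · intro l; linarith [hi l]
      · right; linarith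
  -- all shifts of i₀ are maximizers
  have allmax : ∀ k : ℕ, ∀ l, u l - uhat l ≤ u (i₀ + k) - uhat (i₀ + k) := by
    intro k
    induction k with
    | zero => simpa using hmax
    | succ n ih =>
        have := (key _ ih).1
        intro l
        have e : (i₀ + (n : ZMod p)) + 1 = i₀ + ((n + 1 : ℕ) : ZMod p) := by
          push_cast; ring
        rw [e] at this
        exact this l
  have allmax' : ∀ i : ZMod p, ∀ l, u l - uhat l ≤ u i - uhat i := by
    intro i
    have : i₀ + ((i - i₀).val : ZMod p) = i := by
      rw [ZMod.natCast_val, ZMod.cast_id]; ring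
    have h := allmax (i - i₀).val
    rwa [this] at h
  -- build the loop function
  refine hnfl (fun i => u i - u (i + 1)) (fun i => (key i (allmax' i)).2) ?_
  have : ∑ i : ZMod p, u (i + 1) = ∑ i : ZMod p, u i :=
    Fintype.sum_equiv (Equiv.addRight 1) _ _ (fun i => rfl)
  rw [Finset.sum_sub_distrib, this, sub_self]
end

section
/- Let K ⊆ ℝ × ℝ^k be of the form [0,T] × B̄, with B̄ a closed ball, let u : K → ℝ be upper semicontinuous and w : K → ℝ lower semicontinuous, both bounded. Fix γ ≥ 0 and suppose the function (t,x) ↦ u(t,x) - w(t,x) attains its maximum over K at (t*, x*). For each n ≥ 1 let (t_n, x_n, y_n) be a maximizer over [0,T] × B̄ × B̄ of Φ_n(t,x,y) := u(t,x) - w(t,y) - n|x-y|^{2γ+2} - |x-x*|^{2γ+2} - (t-t*)² (such a maximizer exists by semicontinuity and compactness). Then there is a subsequence along which: (t_n, x_n, y_n) → (t*, x*, x*), n|x_n - y_n|^{2γ+2} + |x_n - x*|^{2γ+2} + (t_n - t*)² → 0, u(t_n, x_n) → u(t*, x*), and w(t_n, y_n) → w(t*, x*). -/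
open Filter Topology

/-- Doubling-of-variables convergence lemma: the penalized maximizers
`(t_n, x_n, y_n)` of `Φ_n` converge (along a subsequence) to the diagonal
maximizer `(t*, x*, x*)`, the penalization terms vanish, and the semicontinuous
functions converge to their values at the limit point. -/
theorem doubling_of_variables {k : ℕ} (T R : ℝ) (hT : 0 ≤ T) (hR : 0 ≤ R)
    (x₀ : EuclideanSpace ℝ (Fin k))
    (u w : ℝ × EuclideanSpace ℝ (Fin k) → ℝ)
    (husc : UpperSemicontinuousOn u (Set.Icc 0 T ×ˢ Metric.closedBall x₀ R))
    (hwlsc : LowerSemicontinuousOn w (Set.Icc 0 T ×ˢ Metric.closedBall x₀ R))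
    (hbdd : ∃ M, ∀ z ∈ Set.Icc 0 T ×ˢ Metric.closedBall x₀ R, |u z| ≤ M ∧ |w z| ≤ M)
    (γ : ℝ) (hγ : 0 ≤ γ)
    (tstar : ℝ) (xstar : EuclideanSpace ℝ (Fin k))
    (hstar : (tstar, xstar) ∈ Set.Icc 0 T ×ˢ Metric.closedBall x₀ R)
    (hmax : ∀ z ∈ Set.Icc 0 T ×ˢ Metric.closedBall x₀ R,
      u z - w z ≤ u (tstar, xstar) - w (tstar, xstar))
    (t : ℕ → ℝ) (x y : ℕ → EuclideanSpace ℝ (Fin k))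
    (hmem : ∀ n, 1 ≤ n → t n ∈ Set.Icc 0 T ∧ x n ∈ Metric.closedBall x₀ R ∧
      y n ∈ Metric.closedBall x₀ R)
    (hmaxn : ∀ n : ℕ, 1 ≤ n → ∀ t' ∈ Set.Icc 0 T, ∀ x' ∈ Metric.closedBall x₀ R,
      ∀ y' ∈ Metric.closedBall x₀ R,
      u (t', x') - w (t', y') - (n : ℝ) * ‖x' - y'‖ ^ (2 * γ + 2)
          - ‖x' - xstar‖ ^ (2 * γ + 2) - (t' - tstar) ^ 2
        ≤ u (t n, x n) - w (t n, y n) - (n : ℝ) * ‖x n - y n‖ ^ (2 * γ + 2)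
          - ‖x n - xstar‖ ^ (2 * γ + 2) - (t n - tstar) ^ 2) :
    ∃ φ : ℕ → ℕ, StrictMono φ ∧
      Tendsto (fun n => (t (φ n), x (φ n), y (φ n))) atTop (𝓝 (tstar, xstar, xstar)) ∧
      Tendsto (fun n => (φ n : ℝ) * ‖x (φ n) - y (φ n)‖ ^ (2 * γ + 2)
        + ‖x (φ n) - xstar‖ ^ (2 * γ + 2) + (t (φ n) - tstar) ^ 2) atTop (𝓝 0) ∧
      Tendsto (fun n => u (t (φ n), x (φ n))) atTop (𝓝 (u (tstar, xstar))) ∧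
      Tendsto (fun n => w (t (φ n), y (φ n))) atTop (𝓝 (w (tstar, xstar))) := by
  classical
  set K : Set (ℝ × EuclideanSpace ℝ (Fin k)) :=
    Set.Icc 0 T ×ˢ Metric.closedBall x₀ R with hK
  set p : ℝ := 2 * γ + 2 with hpdef
  have hp : (0:ℝ) < p := by positivity
  have hp0 : p ≠ 0 := ne_of_gt hp
  obtain ⟨M, hM⟩ := hbdd
  -- lower bound on the maximal value
  have hC : ∀ n : ℕ, 1 ≤ n →
      u (tstar, xstar) - w (tstar, xstar) ≤ u (t n, x n) - w (t n, y n) - ((n : ℝ) * ‖x n - y n‖ ^ p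
        + ‖x n - xstar‖ ^ p + (t n - tstar) ^ 2) := by
    intro n hn
    have h := hmaxn n hn tstar hstar.1 xstar hstar.2 xstar hstar.2
    simp only [sub_self, norm_zero, Real.zero_rpow hp0, mul_zero] at h
    simp only [hpdef]
    linarith
  have hpen_nonneg : ∀ n : ℕ, 0 ≤ (n : ℝ) * ‖x n - y n‖ ^ p := fun n =>
    mul_nonneg (Nat.cast_nonneg n) (Real.rpow_nonneg (norm_nonneg _) p)
  have hQ_nonneg : ∀ n : ℕ, 0 ≤ ‖x n - xstar‖ ^ p + (t n - tstar) ^ 2 := fun n =>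
    add_nonneg (Real.rpow_nonneg (norm_nonneg _) p) (sq_nonneg _)
  -- boundedness of the n-penalization
  have hB : ∀ n : ℕ, 1 ≤ n → (n : ℝ) * ‖x n - y n‖ ^ p
      ≤ 2 * M - (u (tstar, xstar) - w (tstar, xstar)) := by
    intro n hn
    obtain ⟨h1, h2, h3⟩ := hmem n hn
    have hu := (hM (t n, x n) ⟨h1, h2⟩).1
    have hw := (hM (t n, y n) ⟨h1, h3⟩).2
    have := hC n hn
    have := hQ_nonneg n
    have h4 := abs_le.1 hu
    have h5 := abs_le.1 hw
    linarith
  -- compactness extraction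
  have hcomp : IsCompact (Set.Icc (0:ℝ) T ×ˢ
      (Metric.closedBall x₀ R ×ˢ Metric.closedBall x₀ R)) :=
    isCompact_Icc.prod ((isCompact_closedBall _ _).prod (isCompact_closedBall _ _))
  set z : ℕ → ℝ × (EuclideanSpace ℝ (Fin k) × EuclideanSpace ℝ (Fin k)) :=
    fun n => (t (n + 1), (x (n + 1), y (n + 1))) with hz
  have hzmem : ∀ n, z n ∈ Set.Icc (0:ℝ) T ×ˢ
      (Metric.closedBall x₀ R ×ˢ Metric.closedBall x₀ R) := by
    intro n
    obtain ⟨h1, h2, h3⟩ := hmem (n + 1) (Nat.le_add_left 1 n)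
    exact ⟨h1, h2, h3⟩
  obtain ⟨⟨tb, xb, yb⟩, hLmem, ψ, hψ, hconv⟩ := hcomp.tendsto_subseq hzmem
  set φ : ℕ → ℕ := fun n => ψ n + 1 with hφdef
  have hφ : StrictMono φ := fun a b h => by
    simpa [hφdef] using hψ h
  have hφ1 : ∀ n, 1 ≤ φ n := fun n => Nat.le_add_left 1 (ψ n)
  have hφtop : Tendsto φ atTop atTop := hφ.tendsto_atTop
  have hφR : Tendsto (fun n => (φ n : ℝ)) atTop atTop :=
    tendsto_natCast_atTop_atTop.comp hφtop
  have hconv' : Tendsto (fun n => (t (φ n), x (φ n), y (φ n))) atTop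
      (𝓝 (tb, xb, yb)) := hconv
  have htb : Tendsto (fun n => t (φ n)) atTop (𝓝 tb) :=
    (continuous_fst.tendsto _).comp hconv'
  have hxb : Tendsto (fun n => x (φ n)) atTop (𝓝 xb) :=
    ((continuous_fst.comp continuous_snd).tendsto _).comp hconv'
  have hyb : Tendsto (fun n => y (φ n)) atTop (𝓝 yb) :=
    ((continuous_snd.comp continuous_snd).tendsto _).comp hconv'
  have htbmem : tb ∈ Set.Icc (0:ℝ) T := hLmem.1
  have hxbmem : xb ∈ Metric.closedBall x₀ R := hLmem.2.1
  have hybmem : yb ∈ Metric.closedBall x₀ R := hLmem.2.2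
  -- x and y have the same limit
  have hnd : Tendsto (fun n => ‖x (φ n) - y (φ n)‖ ^ p) atTop (𝓝 (‖xb - yb‖ ^ p)) :=
    (Real.continuousAt_rpow_const _ p (Or.inr hp.le)).tendsto.comp (hxb.sub hyb).norm
  have hBdiv : Tendsto (fun n => (2 * M - (u (tstar, xstar) - w (tstar, xstar))) / (φ n : ℝ))
      atTop (𝓝 0) := tendsto_const_nhds.div_atTop hφR
  have hle : ∀ n, ‖x (φ n) - y (φ n)‖ ^ p
      ≤ (2 * M - (u (tstar, xstar) - w (tstar, xstar))) / (φ n : ℝ) := by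
    intro n
    have hpos : (0:ℝ) < (φ n : ℝ) := by exact_mod_cast hφ1 n
    rw [le_div_iff₀ hpos]
    have := hB (φ n) (hφ1 n)
    linarith [this]
  have hxy0 : ‖xb - yb‖ ^ p ≤ 0 :=
    le_of_tendsto_of_tendsto' hnd hBdiv hle
  have hxyeq : yb = xb := by
    have h0 : ‖xb - yb‖ ^ p = 0 :=
      le_antisymm hxy0 (Real.rpow_nonneg (norm_nonneg _) p)
    have := (Real.rpow_eq_zero (norm_nonneg _) hp0).1 h0
    have := norm_eq_zero.1 this
    have := sub_eq_zero.1 this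
    exact this.symm
  subst hxyeq
  -- tendsto within K for the (t,x) and (t,y) pairs
  have hmemK1 : ∀ n, (t (φ n), x (φ n)) ∈ K := fun n =>
    ⟨(hmem (φ n) (hφ1 n)).1, (hmem (φ n) (hφ1 n)).2.1⟩
  have hmemK2 : ∀ n, (t (φ n), y (φ n)) ∈ K := fun n =>
    ⟨(hmem (φ n) (hφ1 n)).1, (hmem (φ n) (hφ1 n)).2.2⟩
  have hbmem : (tb, yb) ∈ K := ⟨htbmem, hybmem⟩
  have htx : Tendsto (fun n => (t (φ n), x (φ n))) atTop (𝓝[K] (tb, yb)) := by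
    rw [tendsto_nhdsWithin_iff]
    exact ⟨htb.prodMk_nhds hxb, Eventually.of_forall hmemK1⟩
  have hty : Tendsto (fun n => (t (φ n), y (φ n))) atTop (𝓝[K] (tb, yb)) := by
    rw [tendsto_nhdsWithin_iff]
    exact ⟨htb.prodMk_nhds hyb, Eventually.of_forall hmemK2⟩
  have hbC : u (tb, yb) - w (tb, yb) ≤ u (tstar, xstar) - w (tstar, xstar) := hmax _ hbmem
  -- key: total penalization eventually small
  have hkey : ∀ ε : ℝ, 0 < ε → ∀ᶠ n in atTop,
      (φ n : ℝ) * ‖x (φ n) - y (φ n)‖ ^ p + ‖x (φ n) - xstar‖ ^ p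
        + (t (φ n) - tstar) ^ 2 < 2 * ε := by
    intro ε hε
    have hu : ∀ᶠ n in atTop, u (t (φ n), x (φ n)) < u (tb, yb) + ε :=
      htx.eventually (husc _ hbmem _ (lt_add_of_pos_right _ hε))
    have hw : ∀ᶠ n in atTop, w (tb, yb) - ε < w (t (φ n), y (φ n)) :=
      hty.eventually (hwlsc _ hbmem _ (sub_lt_self _ hε))
    filter_upwards [hu, hw] with n h1 h2
    have h3 := hC (φ n) (hφ1 n)
    linarith
  -- identify the limit point
  have hQten : Tendsto (fun n => ‖x (φ n) - xstar‖ ^ p + (t (φ n) - tstar) ^ 2)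
      atTop (𝓝 (‖yb - xstar‖ ^ p + (tb - tstar) ^ 2)) := by
    refine Tendsto.add ?_ ?_
    · exact (Real.continuousAt_rpow_const _ p (Or.inr hp.le)).tendsto.comp
        (hxb.sub tendsto_const_nhds).norm
    · exact ((htb.sub tendsto_const_nhds).pow 2)
  have hQ0 : ‖yb - xstar‖ ^ p + (tb - tstar) ^ 2 ≤ 0 := by
    by_contra h
    push_neg at h
    have hε : 0 < (‖yb - xstar‖ ^ p + (tb - tstar) ^ 2) / 4 := by linarith
    have hQle : ‖yb - xstar‖ ^ p + (tb - tstar) ^ 2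
        ≤ 2 * ((‖yb - xstar‖ ^ p + (tb - tstar) ^ 2) / 4) := by
      refine le_of_tendsto hQten ?_
      filter_upwards [hkey _ hε] with n hn
      have := hpen_nonneg (φ n)
      linarith
    linarith
  have hxbeq : yb = xstar := by
    have h1 : ‖yb - xstar‖ ^ p = 0 := by
      have := Real.rpow_nonneg (norm_nonneg (yb - xstar)) p
      nlinarith [sq_nonneg (tb - tstar)]
    have := (Real.rpow_eq_zero (norm_nonneg _) hp0).1 h1
    exact sub_eq_zero.1 (norm_eq_zero.1 this)
  have htbeq : tb = tstar := by
    have h2 : (tb - tstar) ^ 2 = 0 := by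
      have := Real.rpow_nonneg (norm_nonneg (yb - xstar)) p
      nlinarith [sq_nonneg (tb - tstar)]
    have := pow_eq_zero_iff (n := 2) (by norm_num) |>.1 h2
    exact sub_eq_zero.1 this
  subst hxbeq htbeq
  refine ⟨φ, hφ, hconv', ?_, ?_, ?_⟩
  · -- penalization tends to 0
    rw [NormedAddCommGroup.tendsto_atTop]
    intro ε hε
    obtain ⟨N, hN⟩ := (hkey (ε / 3) (by linarith)).exists_forall_of_atTop
    refine ⟨N, fun n hn => ?_⟩
    have h1 := hN n hn
    have h2 := hpen_nonneg (φ n)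
    have h3 := hQ_nonneg (φ n)
    rw [sub_zero, Real.norm_eq_abs, abs_of_nonneg (by linarith)]
    simp only [hpdef] at h1 h2 h3 ⊢
    linarith
  · -- convergence of u values
    rw [NormedAddCommGroup.tendsto_atTop]
    intro ε hε
    have hu : ∀ᶠ n in atTop, u (t (φ n), x (φ n)) < u (tb, yb) + ε :=
      htx.eventually (husc _ hbmem _ (lt_add_of_pos_right _ hε))
    have hw : ∀ᶠ n in atTop, w (tb, yb) - ε < w (t (φ n), y (φ n)) :=
      hty.eventually (hwlsc _ hbmem _ (sub_lt_self _ hε))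
    obtain ⟨N, hN⟩ := (hu.and hw).exists_forall_of_atTop
    refine ⟨N, fun n hn => ?_⟩
    obtain ⟨h1, h2⟩ := hN n hn
    have h3 := hC (φ n) (hφ1 n)
    have h4 := hpen_nonneg (φ n)
    have h5 := hQ_nonneg (φ n)
    rw [Real.norm_eq_abs, abs_sub_lt_iff]
    constructor <;> linarith
  · -- convergence of w values
    rw [NormedAddCommGroup.tendsto_atTop]
    intro ε hε
    have hu : ∀ᶠ n in atTop, u (t (φ n), x (φ n)) < u (tb, yb) + ε :=
      htx.eventually (husc _ hbmem _ (lt_add_of_pos_right _ hε))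
    have hw : ∀ᶠ n in atTop, w (tb, yb) - ε < w (t (φ n), y (φ n)) :=
      hty.eventually (hwlsc _ hbmem _ (sub_lt_self _ hε))
    obtain ⟨N, hN⟩ := (hu.and hw).exists_forall_of_atTop
    refine ⟨N, fun n hn => ?_⟩
    obtain ⟨h1, h2⟩ := hN n hn
    have h3 := hC (φ n) (hφ1 n)
    have h4 := hpen_nonneg (φ n)
    have h5 := hQ_nonneg (φ n)
    rw [Real.norm_eq_abs, abs_sub_lt_iff]
    constructor <;> linarith
end

section
/- Let t < T and let Y, L, U : [t,T] → ℝ be continuous with L(s) ≤ Y(s) ≤ U(s) and U(s) - L(s) > 0 for all s ∈ [t,T]. Let K⁺, K⁻, K̂⁺, K̂⁻ : [t,T] → ℝ be continuous nondecreasing functions vanishing at t, satisfying: (i) K⁺(s) - K⁻(s) = K̂⁺(s) - K̂⁻(s) for all s ∈ [t,T]; (ii) the Skorokhod minimality conditions ∫_t^T (Y(s) - L(s)) dK⁺(s) = 0, ∫_t^T (U(s) - Y(s)) dK⁻(s) = 0, and the same two conditions with K̂⁺, K̂⁻ in place of K⁺, K⁻ (Lebesgue–Stieltjes integrals). Then K⁺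 = K̂⁺ and K⁻ = K̂⁻ on [t,T]. -/
open MeasureTheory Set

/-!
By the minimality conditions, `dK⁺` and `dK̂⁺` are carried by `{Y = L}` and `dK⁻`, `dK̂⁻` by
`{Y = U}`, which is disjoint from `{Y = L}` because `U > L`. The identity
`K⁺ + K̂⁻ = K̂⁺ + K⁻` on `[t, s]` is an identity of Stieltjes measures on `(t, s]`;
restricting it to `{Y = L}` removes the `K⁻`-terms and leaves `dK⁺ = dK̂⁺` there,
hence `K⁺(s) = K̂⁺(s)`.
-/

theorem ContinuousOn.ae_restrict_eq_zero_of_setIntegral_eq_zero {X : Type*} [TopologicalSpace X]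
    [T2Space X] [MeasurableSpace X] [OpensMeasurableSpace X] {μ : Measure X}
    [IsFiniteMeasureOnCompacts μ] {K : Set X} {f : X → ℝ} (hf : ContinuousOn f K)
    (hK : IsCompact K) (hnonneg : ∀ x ∈ K, 0 ≤ f x) (h : ∫ x in K, f x ∂μ = 0) :
    ∀ᵐ x ∂μ.restrict K, f x = 0 :=
  (setIntegral_eq_zero_iff_of_nonneg_ae (ae_restrict_of_forall_mem hK.measurableSet hnonneg)
    (hf.integrableOn_compact hK)).1 h

theorem MeasureTheory.Measure.eq_of_add_eq_add_of_ae_mem {α : Type*} [MeasurableSpace α]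
    {μ₁ μ₂ ν₁ ν₂ : Measure α} {P : Set α}
    (hμ₁ : ∀ᵐ x ∂μ₁, x ∈ P) (hμ₂ : ∀ᵐ x ∂μ₂, x ∈ P)
    (hν₁ : ∀ᵐ x ∂ν₁, x ∉ P) (hν₂ : ∀ᵐ x ∂ν₂, x ∉ P) (h : μ₁ + ν₂ = μ₂ + ν₁) :
    μ₁ = μ₂ := by
  simpa only [Measure.restrict_add, Measure.restrict_eq_self_of_ae_mem hμ₁,
    Measure.restrict_eq_self_of_ae_mem hμ₂,
    Measure.restrict_eq_zero.2 (measure_eq_zero_iff_ae_notMem.2 hν₁),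
    Measure.restrict_eq_zero.2 (measure_eq_zero_iff_ae_notMem.2 hν₂), add_zero] using
    congrArg (Measure.restrict · P) h

theorem StieltjesFunction.measure_restrict_Ioc_eq {f g : StieltjesFunction ℝ} {a b : ℝ}
    (h : ∀ x ∈ Icc a b, f x - g x = f a - g a) :
    f.measure.restrict (Ioc a b) = g.measure.restrict (Ioc a b) := by
  have := isFiniteMeasure_restrict.2 (f.measure_Ioc a b ▸ ENNReal.ofReal_ne_top)
  have := isFiniteMeasure_restrict.2 (g.measure_Ioc a b ▸ ENNReal.ofReal_ne_top)
  refine Measure.ext_of_Iic _ _ fun x => ?_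
  simp only [Measure.restrict_apply measurableSet_Iic, inter_comm (Iic x), Ioc_inter_Iic]
  rcases le_or_gt a (b ⊓ x) with ha | ha
  · rw [f.measure_Ioc, g.measure_Ioc]
    congr 1
    linarith [h _ ⟨ha, inf_le_left⟩]
  · simp [Ioc_eq_empty_of_le ha.le]

theorem skorokhod_uniqueness_general (t T : ℝ)
    (Y L U : ℝ → ℝ)
    (hY : ContinuousOn Y (Icc t T)) (hL : ContinuousOn L (Icc t T))
    (hU : ContinuousOn U (Icc t T))
    (hLY : ∀ s ∈ Icc t T, L s ≤ Y s) (hYU : ∀ s ∈ Icc t T, Y s ≤ U s)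
    (hsep : ∀ s ∈ Icc t T, 0 < U s - L s)
    (Kp Km Khp Khm : StieltjesFunction ℝ)
    (hKp0 : Kp t = 0) (hKhp0 : Khp t = 0)
    (hdiff : ∀ s ∈ Icc t T, Kp s - Km s = Khp s - Khm s)
    (hmin1 : ∫ s in Icc t T, (Y s - L s) ∂Kp.measure = 0)
    (hmin2 : ∫ s in Icc t T, (U s - Y s) ∂Km.measure = 0)
    (hmin3 : ∫ s in Icc t T, (Y s - L s) ∂Khp.measure = 0)
    (hmin4 : ∫ s in Icc t T, (U s - Y s) ∂Khm.measure = 0) :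
    ∀ s ∈ Icc t T, Kp s = Khp s ∧ Km s = Khm s := by
  intro s hs
  have hsub : Ioc t s ⊆ Icc t T := Ioc_subset_Icc_self.trans (Icc_subset_Icc_right hs.2)
  have hlower (K : StieltjesFunction ℝ) (hK : ∫ x in Icc t T, (Y x - L x) ∂K.measure = 0) :
      ∀ᵐ x ∂K.measure.restrict (Ioc t s), x ∈ {x | Y x = L x} := by
    filter_upwards [ae_restrict_of_ae_restrict_of_subset hsub
      ((hY.sub hL).ae_restrict_eq_zero_of_setIntegral_eq_zero isCompact_Icc
        (fun x hx => sub_nonneg.2 (hLY x hx)) hK)] with x hx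
    exact sub_eq_zero.1 hx
  have hupper (K : StieltjesFunction ℝ) (hK : ∫ x in Icc t T, (U x - Y x) ∂K.measure = 0) :
      ∀ᵐ x ∂K.measure.restrict (Ioc t s), x ∉ {x | Y x = L x} := by
    filter_upwards [ae_restrict_mem measurableSet_Ioc, ae_restrict_of_ae_restrict_of_subset hsub
      ((hU.sub hY).ae_restrict_eq_zero_of_setIntegral_eq_zero isCompact_Icc
        (fun x hx => sub_nonneg.2 (hYU x hx)) hK)] with x hx hUY hYL
    rw [Pi.sub_apply] at hUY
    linarith [hsep x (hsub hx)]
  have hsum : (Kp + Khm).measure.restrict (Ioc t s) = (Khp + Km).measure.restrict (Ioc t s) :=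
    StieltjesFunction.measure_restrict_Ioc_eq fun x hx => by
      simp only [StieltjesFunction.add_apply]
      linarith [hdiff x ⟨hx.1, hx.2.trans hs.2⟩, hdiff t ⟨le_rfl, hs.1.trans hs.2⟩]
  simp only [StieltjesFunction.measure_add, Measure.restrict_add] at hsum
  have hplus := congrArg (· (Ioc t s)) (Measure.eq_of_add_eq_add_of_ae_mem (hlower Kp hmin1)
    (hlower Khp hmin3) (hupper Km hmin2) (hupper Khm hmin4) hsum)
  simp only [Measure.restrict_apply_self, StieltjesFunction.measure_Ioc, hKp0, hKhp0,
    sub_zero] at hplus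
  have hKp : Kp s = Khp s :=
    (ENNReal.ofReal_eq_ofReal_iff (hKp0 ▸ Kp.mono hs.1) (hKhp0 ▸ Khp.mono hs.1)).1 hplus
  exact ⟨hKp, by linarith [hdiff s hs]⟩

/-- Uniqueness of the reflecting increasing processes for a doubly reflected
path with completely separated barriers: the Skorokhod minimality conditions
and equality of the differences `K⁺ - K⁻ = K̂⁺ - K̂⁻` force `K⁺ = K̂⁺` and
`K⁻ = K̂⁻` on `[t,T]`. -/
theorem skorokhod_uniqueness (t T : ℝ) (htT : t < T)
    (Y L U : ℝ → ℝ)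
    (hY : ContinuousOn Y (Icc t T)) (hL : ContinuousOn L (Icc t T))
    (hU : ContinuousOn U (Icc t T))
    (hLY : ∀ s ∈ Icc t T, L s ≤ Y s) (hYU : ∀ s ∈ Icc t T, Y s ≤ U s)
    (hsep : ∀ s ∈ Icc t T, 0 < U s - L s)
    (Kp Km Khp Khm : StieltjesFunction ℝ)
    (hKpc : Continuous Kp) (hKmc : Continuous Km)
    (hKhpc : Continuous Khp) (hKhmc : Continuous Khm)
    (hKp0 : Kp t = 0) (hKm0 : Km t = 0) (hKhp0 : Khp t = 0) (hKhm0 : Khm t = 0)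
    (hdiff : ∀ s ∈ Icc t T, Kp s - Km s = Khp s - Khm s)
    (hmin1 : ∫ s in Icc t T, (Y s - L s) ∂Kp.measure = 0)
    (hmin2 : ∫ s in Icc t T, (U s - Y s) ∂Km.measure = 0)
    (hmin3 : ∫ s in Icc t T, (Y s - L s) ∂Khp.measure = 0)
    (hmin4 : ∫ s in Icc t T, (U s - Y s) ∂Khm.measure = 0) :
    ∀ s ∈ Icc t T, Kp s = Khp s ∧ Km s = Khm s :=
  skorokhod_uniqueness_general t T Y L U hY hL hU hLY hYU hsep Kp Km Khp Khm hKp0 hKhp0 hdiff hmin1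
    hmin2 hmin3 hmin4
end
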